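/- arXiv:2210.00382 — 3 statements merged into one kernel-verified Lean document; each statement's English description precedes it below -/
import Mathlib

section
/- If the angles of a two-periodic Kagome configuration satisfy θ₁ = η₄, θ₂ = η₃, θ₃ = η₂, θ₄ = η₁, then the eight hexagon-closure constraints hold; e.g., -cos(η₁+π/3) - cos(θ₂+2π/3) + cos(η₂) + cos(θ₄+π/3) - cos(η₃-π/3) - cos(θ₃) = 0 and the corresponding sine identity, and similarly for the other three hexagons. -/
open Real

/-- If the eight angles of a two-periodic Kagome configuration satisfy
`θ₁ = η₄, θ₂ = η₃, θ₃ = η₂, θ₄ = η₁`, then all eight hexagon-closure constraints hold. -/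
theorem angle_relation_closes_hexagons
    (θ₁ θ₂ θ₃ θ₄ η₁ η₂ η₃ η₄ : ℝ)
    (h1 : θ₁ = η₄) (h2 : θ₂ = η₃) (h3 : θ₃ = η₂) (h4 : θ₄ = η₁) :
    (-Real.cos (η₁ + π/3) - Real.cos (θ₂ + 2*π/3) + Real.cos η₂ + Real.cos (θ₄ + π/3)
      - Real.cos (η₃ - π/3) - Real.cos θ₃ = 0) ∧
    (-Real.sin (η₁ + π/3) - Real.sin (θ₂ + 2*π/3) + Real.sin η₂ + Real.sin (θ₄ + π/3)
      - Real.sin (η₃ - π/3) - Real.sin θ₃ = 0) ∧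
    (-Real.cos (η₂ + π/3) - Real.cos (θ₁ + 2*π/3) + Real.cos η₁ + Real.cos (θ₃ + π/3)
      - Real.cos (η₄ - π/3) - Real.cos θ₄ = 0) ∧
    (-Real.sin (η₂ + π/3) - Real.sin (θ₁ + 2*π/3) + Real.sin η₁ + Real.sin (θ₃ + π/3)
      - Real.sin (η₄ - π/3) - Real.sin θ₄ = 0) ∧
    (-Real.cos (η₃ + π/3) - Real.cos (θ₄ + 2*π/3) + Real.cos η₄ + Real.cos (θ₂ + π/3)
      - Real.cos (η₁ - π/3) - Real.cos θ₁ = 0) ∧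
    (-Real.sin (η₃ + π/3) - Real.sin (θ₄ + 2*π/3) + Real.sin η₄ + Real.sin (θ₂ + π/3)
      - Real.sin (η₁ - π/3) - Real.sin θ₁ = 0) ∧
    (-Real.cos (η₄ + π/3) - Real.cos (θ₃ + 2*π/3) + Real.cos η₃ + Real.cos (θ₁ + π/3)
      - Real.cos (η₂ - π/3) - Real.cos θ₂ = 0) ∧
    (-Real.sin (η₄ + π/3) - Real.sin (θ₃ + 2*π/3) + Real.sin η₃ + Real.sin (θ₁ + π/3)
      - Real.sin (η₂ - π/3) - Real.sin θ₂ = 0) := by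
  subst h1 h2 h3 h4
  have key : ∀ x : ℝ, (x + 2*π/3) = (x - π/3) + π := by intro x; ring
  refine ⟨?_, ?_, ?_, ?_, ?_, ?_, ?_, ?_⟩ <;>
    simp only [key, Real.cos_add_pi, Real.sin_add_pi] <;> ring
end

section
/- The eight hexagon-closure constraints are redundant: for arbitrary angles θ₁,…,θ₄, η₁,…,η₄ ∈ ℝ, the sum of the left-hand sides of the four cosine constraints (for hexagons 1–4) is identically zero, and likewise the sum of the four sine constraints is identically zero. Consequently, if hexagons 1, 2, 3 are closed then hexagon 4 is automatically closed. -/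
open Real

/-- Cosine hexagon-closure expressions for the four hexagons of the two-periodic
Kagome unit cell. -/
noncomputable def hexCos (θ₁ θ₂ θ₃ θ₄ η₁ η₂ η₃ η₄ : ℝ) : Fin 4 → ℝ :=
  ![ -Real.cos (η₁ + π/3) - Real.cos (θ₂ + 2*π/3) + Real.cos η₂ + Real.cos (θ₄ + π/3)
      - Real.cos (η₃ - π/3) - Real.cos θ₃,
     -Real.cos (η₂ + π/3) - Real.cos (θ₁ + 2*π/3) + Real.cos η₁ + Real.cos (θ₃ + π/3)
      - Real.cos (η₄ - π/3) - Real.cos θ₄,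
     -Real.cos (η₃ + π/3) - Real.cos (θ₄ + 2*π/3) + Real.cos η₄ + Real.cos (θ₂ + π/3)
      - Real.cos (η₁ - π/3) - Real.cos θ₁,
     -Real.cos (η₄ + π/3) - Real.cos (θ₃ + 2*π/3) + Real.cos η₃ + Real.cos (θ₁ + π/3)
      - Real.cos (η₂ - π/3) - Real.cos θ₂ ]

/-- Sine hexagon-closure expressions for the four hexagons. -/
noncomputable def hexSin (θ₁ θ₂ θ₃ θ₄ η₁ η₂ η₃ η₄ : ℝ) : Fin 4 → ℝ :=
  ![ -Real.sin (η₁ + π/3) - Real.sin (θ₂ + 2*π/3) + Real.sin η₂ + Real.sin (θ₄ + π/3)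
      - Real.sin (η₃ - π/3) - Real.sin θ₃,
     -Real.sin (η₂ + π/3) - Real.sin (θ₁ + 2*π/3) + Real.sin η₁ + Real.sin (θ₃ + π/3)
      - Real.sin (η₄ - π/3) - Real.sin θ₄,
     -Real.sin (η₃ + π/3) - Real.sin (θ₄ + 2*π/3) + Real.sin η₄ + Real.sin (θ₂ + π/3)
      - Real.sin (η₁ - π/3) - Real.sin θ₁,
     -Real.sin (η₄ + π/3) - Real.sin (θ₃ + 2*π/3) + Real.sin η₃ + Real.sin (θ₁ + π/3)
      - Real.sin (η₂ - π/3) - Real.sin θ₂ ]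

/-- The eight hexagon-closure constraints are redundant: the four cosine expressions
sum to zero identically, and likewise the four sine expressions; consequently, if
hexagons 1, 2, 3 are closed then hexagon 4 is automatically closed. -/
theorem hexagon_constraints_redundant (θ₁ θ₂ θ₃ θ₄ η₁ η₂ η₃ η₄ : ℝ) :
    (∑ k : Fin 4, hexCos θ₁ θ₂ θ₃ θ₄ η₁ η₂ η₃ η₄ k = 0) ∧
    (∑ k : Fin 4, hexSin θ₁ θ₂ θ₃ θ₄ η₁ η₂ η₃ η₄ k = 0) ∧
    ((∀ k : Fin 4, k ≠ 3 → hexCos θ₁ θ₂ θ₃ θ₄ η₁ η₂ η₃ η₄ k = 0) →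
      (∀ k : Fin 4, k ≠ 3 → hexSin θ₁ θ₂ θ₃ θ₄ η₁ η₂ η₃ η₄ k = 0) →
      hexCos θ₁ θ₂ θ₃ θ₄ η₁ η₂ η₃ η₄ 3 = 0 ∧ hexSin θ₁ θ₂ θ₃ θ₄ η₁ η₂ η₃ η₄ 3 = 0) := by

  have hc : Real.cos (2*π/3) = -(1/2) := by
    have : (2*π/3) = π - π/3 := by ring
    rw [this, Real.cos_pi_sub, Real.cos_pi_div_three]
  have hs : Real.sin (2*π/3) = Real.sqrt 3 / 2 := by
    have : (2*π/3) = π - π/3 := by ring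
    rw [this, Real.sin_pi_sub, Real.sin_pi_div_three]
  have key1 : ∑ k : Fin 4, hexCos θ₁ θ₂ θ₃ θ₄ η₁ η₂ η₃ η₄ k = 0 := by
    simp only [hexCos, Fin.sum_univ_four, Matrix.cons_val_zero, Matrix.cons_val_one,
      Matrix.head_cons, Matrix.cons_val_two, Matrix.tail_cons, Matrix.cons_val_three]
    simp only [Real.cos_add, Real.cos_sub, Real.sin_add, Real.sin_sub,
      Real.cos_pi_div_three, Real.sin_pi_div_three, hc, hs]
    ring
  have key2 : ∑ k : Fin 4, hexSin θ₁ θ₂ θ₃ θ₄ η₁ η₂ η₃ η₄ k = 0 := by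
    simp only [hexSin, Fin.sum_univ_four, Matrix.cons_val_zero, Matrix.cons_val_one,
      Matrix.head_cons, Matrix.cons_val_two, Matrix.tail_cons, Matrix.cons_val_three]
    simp only [Real.cos_add, Real.cos_sub, Real.sin_add, Real.sin_sub,
      Real.cos_pi_div_three, Real.sin_pi_div_three, hc, hs]
    ring
  refine ⟨key1, key2, fun h1 h2 => ⟨?_, ?_⟩⟩
  · have := key1
    rw [Fin.sum_univ_four, h1 0 (by decide), h1 1 (by decide), h1 2 (by decide)] at this
    linarith
  · have := key2
    rw [Fin.sum_univ_four, h2 0 (by decide), h2 1 (by decide), h2 2 (by decide)] at this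
    linarith
end

section
/- Let N ≥ 2 and 1 ≤ s ≤ ⌊N/2⌋ be integers, and t₁, t₂ ∈ ℝ with t₁·t₂ ≠ 0. If (t₁ cos(2ksπ/N) + t₂ sin(2ksπ/N))² takes the same value for all k = 0,1,…,N-1, then sin(4sπ/N) = 0, hence 4s/N ∈ ℤ, so s = N/4 or s = N/2. -/
open Real

/-!
Compare the samples at `k = 1` and `k = N - 1`. Since `2(N-1)sπ/N = 2πs - x` with `x = 2sπ/N`,
the two squared values are `(t₁ cos x ± t₂ sin x)²`, whose difference is `2 t₁ t₂ sin 2x`.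
Hence `sin(4sπ/N) = 0`, i.e. `N ∣ 4s`, and `0 < 4s ≤ 2N` leaves `4s = N` or `4s = 2N`.
-/

lemma sin_two_mul_eq_zero_of_sq_add_eq_sq_sub {a b x : ℝ} (hab : a * b ≠ 0)
    (h : (a * cos x + b * sin x) ^ 2 = (a * cos x - b * sin x) ^ 2) : sin (2 * x) = 0 := by
  have hdiff : 2 * (a * b) * sin (2 * x) = 0 := by
    rw [sin_two_mul]
    linear_combination h
  simpa [hab] using hdiff

lemma two_mul_sub_mul_pi_div_eq {N : ℕ} (hN : N ≠ 0) {k : ℕ} (hk : k ≤ N) (s : ℕ) :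
    2 * ((N - k : ℕ) : ℝ) * s * π / N = s * (2 * π) - 2 * (k : ℝ) * s * π / N := by
  rw [Nat.cast_sub hk]
  field_simp

lemma nat_dvd_of_sin_nat_mul_pi_div_eq_zero {m N : ℕ} (hN : N ≠ 0)
    (h : sin (m * π / N) = 0) : N ∣ m := by
  obtain ⟨n, hn⟩ := sin_eq_zero_iff.mp h
  have hnN : (n : ℝ) * N = m := by
    rw [eq_div_iff (by exact_mod_cast hN)] at hn
    exact mul_right_cancel₀ pi_ne_zero (by linarith)
  have hdvd : (N : ℤ) ∣ m := ⟨n, by rw [mul_comm]; exact_mod_cast hnN.symm⟩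
  exact_mod_cast hdvd

lemma eq_or_eq_two_mul_of_dvd {N m : ℕ} (hdvd : N ∣ m) (hm : 0 < m) (hmN : m ≤ 2 * N) :
    m = N ∨ m = 2 * N := by
  obtain ⟨c, rfl⟩ := hdvd
  have hc1 : 1 ≤ c := Nat.pos_of_mul_pos_left hm
  have hc2 : c ≤ 2 := by
    have hN : 0 < N := Nat.pos_of_mul_pos_right hm
    nlinarith
  interval_cases c <;> simp [mul_comm]

theorem fleck_hutchinson_combination_consistency_general
    (N s : ℕ) (hs1 : 1 ≤ s) (hs2 : 2 * s ≤ N)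
    (t₁ t₂ : ℝ) (ht : t₁ * t₂ ≠ 0)
    (h : ∀ k < N, ∀ l < N,
      (t₁ * Real.cos (2 * (k : ℝ) * (s : ℝ) * π / (N : ℝ))
        + t₂ * Real.sin (2 * (k : ℝ) * (s : ℝ) * π / (N : ℝ))) ^ 2
      = (t₁ * Real.cos (2 * (l : ℝ) * (s : ℝ) * π / (N : ℝ))
        + t₂ * Real.sin (2 * (l : ℝ) * (s : ℝ) * π / (N : ℝ))) ^ 2) :
    Real.sin (4 * (s : ℝ) * π / (N : ℝ)) = 0 ∧ (4 * s = N ∨ 2 * s = N) := by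
  have hN : N ≠ 0 := by omega
  have hsym := h 1 (by omega) (N - 1) (by omega)
  rw [two_mul_sub_mul_pi_div_eq hN (by omega), cos_nat_mul_two_pi_sub, sin_nat_mul_two_pi_sub,
    mul_neg, ← sub_eq_add_neg] at hsym
  have hsin : sin (4 * (s : ℝ) * π / N) = 0 := by
    convert sin_two_mul_eq_zero_of_sq_add_eq_sq_sub ht hsym using 2
    push_cast
    ring
  refine ⟨hsin, ?_⟩
  have hdvd : N ∣ 4 * s := nat_dvd_of_sin_nat_mul_pi_div_eq_zero hN (by exact_mod_cast hsin)
  rcases eq_or_eq_two_mul_of_dvd hdvd (by omega) (by omega) with h4 | h4 <;> omega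

/-- Consistency condition for linear combinations `t₁u₁^{s,N} + t₂u₂^{s,N}`: if
`(t₁cos(2ksπ/N) + t₂sin(2ksπ/N))²` is the same for all `k = 0,…,N-1` and `t₁t₂ ≠ 0`,
then `sin(4sπ/N) = 0`, hence `s = N/4` or `s = N/2`. -/
theorem fleck_hutchinson_combination_consistency
    (N s : ℕ) (hN : 2 ≤ N) (hs1 : 1 ≤ s) (hs2 : 2 * s ≤ N)
    (t₁ t₂ : ℝ) (ht : t₁ * t₂ ≠ 0)
    (h : ∀ k < N, ∀ l < N,
      (t₁ * Real.cos (2 * (k : ℝ) * (s : ℝ) * π / (N : ℝ))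
        + t₂ * Real.sin (2 * (k : ℝ) * (s : ℝ) * π / (N : ℝ))) ^ 2
      = (t₁ * Real.cos (2 * (l : ℝ) * (s : ℝ) * π / (N : ℝ))
        + t₂ * Real.sin (2 * (l : ℝ) * (s : ℝ) * π / (N : ℝ))) ^ 2) :
    Real.sin (4 * (s : ℝ) * π / (N : ℝ)) = 0 ∧ (4 * s = N ∨ 2 * s = N) :=
  fleck_hutchinson_combination_consistency_general N s hs1 hs2 t₁ t₂ ht h
end
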